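/- arXiv:2103.06897 — 8 statements merged into one kernel-verified Lean document; each statement's English description precedes it below -/
import Mathlib

section
/- If X is a positive semidefinite operator on a finite-dimensional Hilbert space with p_k = Tr(X^k) and p_1 = Tr(X) = 1, then for every n ≥ 3, p_n^{n-2} ≥ p_{n-1}^{n-1}. -/
/-!
Diagonalising `X`, the moments are power sums `p k = ∑ λᵢ ^ k` of its nonnegative eigenvalues,
so by Cauchy–Schwarz the sequence is log-convex: `p (k + 1) ^ 2 ≤ p (k + 2) * p k`.
Log-convexity gives `p (n - 1) ^ (n - 1) ≤ p n ^ (n - 2) * p 1` by induction on `n`,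
and `p 1 = 1`.
-/

open ComplexOrder

theorem Matrix.IsHermitian.trace_pow_eq_sum_eigenvalues_pow {n 𝕜 : Type*} [Fintype n]
    [DecidableEq n] [RCLike 𝕜] {A : Matrix n n 𝕜} (hA : A.IsHermitian) (k : ℕ) :
    (A ^ k).trace = ∑ i, (hA.eigenvalues i : 𝕜) ^ k := by
  conv_lhs => rw [hA.spectral_theorem, ← map_pow, Unitary.conjStarAlgAut_apply, trace_mul_cycle,
    Unitary.coe_star_mul_self, one_mul, diagonal_pow, trace_diagonal]
  simp

section PowerSum

variable {ι : Type*} {s : Finset ι} {x : ι → ℝ}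

theorem Finset.sq_sum_pow_succ_le (hx : ∀ i ∈ s, 0 ≤ x i) (k : ℕ) :
    (∑ i ∈ s, x i ^ (k + 1)) ^ 2 ≤ (∑ i ∈ s, x i ^ (k + 2)) * ∑ i ∈ s, x i ^ k :=
  Finset.sum_sq_le_sum_mul_sum_of_sq_le_mul s (fun i hi => pow_nonneg (hx i hi) _)
    (fun i hi => pow_nonneg (hx i hi) _) (fun i _ => by ring_nf; rfl)

theorem Finset.sum_pow_pos (hx : ∀ i ∈ s, 0 ≤ x i) (hsum : 0 < ∑ i ∈ s, x i) (k : ℕ) :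
    0 < ∑ i ∈ s, x i ^ k := by
  obtain ⟨j, hj, hxj⟩ :=
    Finset.exists_lt_of_sum_lt (f := fun _ => 0) (g := x) (by simpa using hsum)
  exact Finset.sum_pos' (fun i hi => pow_nonneg (hx i hi) k) ⟨j, hj, pow_pos hxj k⟩

end PowerSum

/-- Log-convexity: `log a (m + 1)` lies below the chord from `log a 1` to `log a (m + 2)`. -/
theorem pow_le_pow_mul_apply_one_of_sq_le_mul {a : ℕ → ℝ} (hpos : ∀ k, 0 < a k)
    (hsq : ∀ k, a (k + 1) ^ 2 ≤ a (k + 2) * a k) (m : ℕ) :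
    a (m + 1) ^ (m + 1) ≤ a (m + 2) ^ m * a 1 := by
  induction m with
  | zero => simp
  | succ m ih =>
    refine le_of_mul_le_mul_right ?_ (pow_pos (hpos (m + 2)) m)
    calc a (m + 2) ^ (m + 2) * a (m + 2) ^ m
        = (a (m + 2) ^ 2) ^ (m + 1) := by ring
      _ ≤ (a (m + 3) * a (m + 1)) ^ (m + 1) := pow_le_pow_left₀ (sq_nonneg _) (hsq (m + 1)) _
      _ = a (m + 3) ^ (m + 1) * a (m + 1) ^ (m + 1) := mul_pow _ _ _
      _ ≤ a (m + 3) ^ (m + 1) * (a (m + 2) ^ m * a 1) :=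
        mul_le_mul_of_nonneg_left ih (pow_nonneg (hpos _).le _)
      _ = a (m + 3) ^ (m + 1) * a 1 * a (m + 2) ^ m := by ring

theorem higher_order_moment_ineq (d : ℕ) (X : Matrix (Fin d) (Fin d) ℂ)
    (hX : X.PosSemidef) (htr : X.trace = 1)
    (p : ℕ → ℝ) (hp : ∀ k, (X ^ k).trace = (p k : ℂ)) :
    ∀ n : ℕ, 3 ≤ n → (p n) ^ (n - 2) ≥ (p (n - 1)) ^ (n - 1) := by
  have hev := hX.eigenvalues_nonneg
  have hpk (k : ℕ) : p k = ∑ i, hX.isHermitian.eigenvalues i ^ k := by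
    apply Complex.ofReal_injective
    push_cast
    exact (hp k).symm.trans (hX.isHermitian.trace_pow_eq_sum_eigenvalues_pow k)
  have hp1 : p 1 = 1 := by exact_mod_cast (hp 1).symm.trans ((pow_one X).symm ▸ htr)
  have hsum : ∑ i, hX.isHermitian.eigenvalues i = 1 := by simpa [hp1] using (hpk 1).symm
  have hpos (k : ℕ) : 0 < p k :=
    hpk k ▸ Finset.sum_pow_pos (fun i _ => hev i) (hsum ▸ one_pos) k
  have hsq (k : ℕ) : p (k + 1) ^ 2 ≤ p (k + 2) * p k := by
    simpa only [hpk] using Finset.sq_sum_pow_succ_le (fun i _ => hev i) k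
  intro n hn
  obtain ⟨m, rfl⟩ : ∃ m, n = m + 3 := ⟨n - 3, by omega⟩
  simpa [hp1] using pow_le_pow_mul_apply_one_of_sq_le_mul hpos hsq (m + 1)
end

section
/- There do not exist a finite-dimensional quantum state ρ ≥ 0 and Hermitian observable X such that Tr(ρ X^k) = m_k for k = 0,...,4 with (m_0, m_1, m_2, m_3, m_4) = (1, 1, 1, 1, 2), even though the Hankel matrix H_2 with rows (1,1,1),(1,1,1),(1,1,2) is positive semidefinite. -/
/-!
The kernel vector `(1, -1, 0)` of `H₂` gives `Tr (ρ (X - 1)²) = m₀ - 2 m₁ + m₂ = 0`. For `ρ ≥ 0`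
this forces `ρ (X - 1) = 0`, so `ρ Xᵏ = ρ` and every moment equals `Tr ρ = 1`, contradicting
`m₄ = 2`.
-/

open ComplexOrder Matrix

theorem mul_pow_eq_self_of_mul_eq_self {M : Type*} [Monoid M] {a b : M} (h : a * b = a) :
    ∀ n : ℕ, a * b ^ n = a
  | 0 => by rw [pow_zero, mul_one]
  | n + 1 => by rw [pow_succ, ← mul_assoc, mul_pow_eq_self_of_mul_eq_self h n, h]

namespace Matrix

variable {𝕜 n : Type*} [RCLike 𝕜] [Fintype n]

open scoped MatrixOrder in
theorem PosSemidef.mul_eq_zero_of_trace_mul_mul_self_eq_zero {A Y : Matrix n n 𝕜}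
    (hA : A.PosSemidef) (hY : Y.IsHermitian) (h : (A * (Y * Y)).trace = 0) : A * Y = 0 := by
  classical
  obtain ⟨B, rfl⟩ := CStarAlgebra.nonneg_iff_eq_star_mul_self.mp hA.nonneg
  have hBY : B * Y = 0 := by
    rw [← trace_conjTranspose_mul_self_eq_zero_iff, ← h, conjTranspose_mul, hY.eq,
      Matrix.mul_assoc, trace_mul_comm]
    simp only [star_eq_conjTranspose, Matrix.mul_assoc]
  rw [Matrix.mul_assoc, hBY, Matrix.mul_zero]

end Matrix

theorem no_representation_11112 :
    ¬ ∃ (d : ℕ) (ρ X : Matrix (Fin d) (Fin d) ℂ),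
      ρ.PosSemidef ∧ X.IsHermitian ∧
      (ρ * X ^ 0).trace = 1 ∧ (ρ * X ^ 1).trace = 1 ∧ (ρ * X ^ 2).trace = 1 ∧
      (ρ * X ^ 3).trace = 1 ∧ (ρ * X ^ 4).trace = 2 := by
  rintro ⟨d, ρ, X, hρ, hX, h0, h1, h2, -, h4⟩
  have hvar : (ρ * ((X - 1) * (X - 1))).trace = 0 := by
    have : ρ * ((X - 1) * (X - 1)) = ρ * X ^ 2 - 2 • ρ * X ^ 1 + ρ * X ^ 0 := by noncomm_ring
    rw [this, trace_add, trace_sub, Matrix.smul_mul, trace_smul, h0, h1, h2]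
    norm_num
  have hfix : ρ * X = ρ := by
    have := hρ.mul_eq_zero_of_trace_mul_mul_self_eq_zero (hX.sub isHermitian_one) hvar
    rwa [Matrix.mul_sub, Matrix.mul_one, sub_eq_zero] at this
  rw [mul_pow_eq_self_of_mul_eq_self hfix] at h0 h4
  norm_num [h0] at h4
end

section
/- There do not exist a finite-dimensional quantum state ρ ≥ 0 with Tr(ρ) = 1 and a positive semidefinite observable X ≥ 0 such that Tr(ρ X^k) = m_k for k = 0,...,4 with (m_0, m_1, m_2, m_3, m_4) = (1, 1, 2, 4, 9). -/
/-!
Let `L(p) = Tr(ρ p(X))`. The polynomial `N = X (2 - X)²` is nonnegative on the spectrum of `X`,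
and `L(N) = 4 m₁ - 4 m₂ + m₃ = 0`. For positive semidefinite `ρ` and `N` this forces `ρ N = 0`,
hence `L(X N) = 4 m₂ - 4 m₃ + m₄` must vanish too; but it equals `1`.
-/

open ComplexOrder Matrix

theorem Matrix.PosSemidef.mul_eq_zero_of_trace_mul_eq_zero {𝕜 n : Type*} [RCLike 𝕜] [Fintype n]
    {A B : Matrix n n 𝕜} (hA : A.PosSemidef) (hB : B.PosSemidef) (h : (A * B).trace = 0) :
    A * B = 0 := by
  classical
  open scoped MatrixOrder in
  obtain ⟨a, rfl⟩ := CStarAlgebra.nonneg_iff_eq_star_mul_self.mp hA.nonneg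
  open scoped MatrixOrder in
  obtain ⟨b, rfl⟩ := CStarAlgebra.nonneg_iff_eq_star_mul_self.mp hB.nonneg
  simp only [star_eq_conjTranspose] at h ⊢
  have hba : b * aᴴ = 0 := by
    rw [← trace_conjTranspose_mul_self_eq_zero_iff, ← h]
    calc ((b * aᴴ)ᴴ * (b * aᴴ)).trace = (a * bᴴ * b * aᴴ).trace := by
          simp only [conjTranspose_mul, conjTranspose_conjTranspose, mul_assoc]
      _ = (aᴴ * (a * bᴴ * b)).trace := Matrix.trace_mul_comm _ _
      _ = (aᴴ * a * (bᴴ * b)).trace := by simp only [mul_assoc]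
  calc aᴴ * a * (bᴴ * b) = aᴴ * (b * aᴴ)ᴴ * b := by
        simp only [conjTranspose_mul, conjTranspose_conjTranspose, mul_assoc]
    _ = 0 := by rw [hba, conjTranspose_zero, mul_zero, zero_mul]

theorem no_representation_11249 :
    ¬ ∃ (d : ℕ) (ρ X : Matrix (Fin d) (Fin d) ℂ),
      ρ.PosSemidef ∧ ρ.trace = 1 ∧ X.PosSemidef ∧
      (ρ * X ^ 0).trace = 1 ∧ (ρ * X ^ 1).trace = 1 ∧ (ρ * X ^ 2).trace = 2 ∧
      (ρ * X ^ 3).trace = 4 ∧ (ρ * X ^ 4).trace = 9 := by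
  rintro ⟨d, ρ, X, hρ, -, hX, -, h1, h2, h3, h4⟩
  set N := (2 - X) * X * (2 - X) with hN
  have hN_psd : N.PosSemidef := by
    have h2X : (2 - X)ᴴ = 2 - X := by
      rw [conjTranspose_sub, hX.isHermitian.eq, conjTranspose_ofNat]
    have := hX.conjTranspose_mul_mul_same (2 - X)
    rwa [h2X] at this
  have hρN : ρ * N = 0 := by
    refine hρ.mul_eq_zero_of_trace_mul_eq_zero hN_psd ?_
    have : ρ * N = (4 : ℂ) • (ρ * X ^ 1) - (4 : ℂ) • (ρ * X ^ 2) + ρ * X ^ 3 := by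
      rw [hN]; noncomm_ring; module
    rw [this, trace_add, trace_sub, trace_smul, trace_smul, h1, h2, h3]
    norm_num
  have hρNX : ρ * N * X = (4 : ℂ) • (ρ * X ^ 2) - (4 : ℂ) • (ρ * X ^ 3) + ρ * X ^ 4 := by
    rw [hN]; noncomm_ring; module
  have := congrArg trace hρNX
  rw [hρN, zero_mul, trace_add, trace_sub, trace_smul, trace_smul, h2, h3, h4] at this
  norm_num at this
end

section
/- The moment sequence (1, 1, 1, 1, 2) is a limit of moment sequences realized by pure states: for the pure state |φ_ε⟩ = √(1−ε)|0⟩ + √ε|1⟩ and observable X_ε = diag(1, ε^{-1/4}) on C², one has ⟨φ_ε| X_ε^k |φ_ε⟩ → m_k as ε → 0⁺ for k = 0,...,4, where (m_0,...,m_4) = (1,1,1,1,2). -/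
/-! With `a = 1 - k/4`, the `k`-th moment equals `(1 - ε) + ε ^ a`. For `k < 4` the exponent is
positive and the second summand vanishes as `ε → 0⁺`; for `k = 4` it is identically `1`: the
weight `ε` of `|1⟩` exactly compensates the eigenvalue `ε ^ (-1/4)` raised to the fourth power. -/

open Filter Matrix

theorem dotProduct_diagonal_pow_mulVec {n R : Type*} [Fintype n] [DecidableEq n] [CommSemiring R]
    (d v : n → R) (k : ℕ) :
    v ⬝ᵥ (diagonal d ^ k) *ᵥ v = ∑ i, d i ^ k * v i ^ 2 := by
  rw [diagonal_pow]
  simp only [dotProduct, mulVec_diagonal, Pi.pow_apply]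
  exact Finset.sum_congr rfl fun i _ => by ring

theorem moment_eq_one_sub_add_rpow {ε : ℝ} (hε₀ : 0 < ε) (hε₁ : ε ≤ 1) (k : ℕ) :
    ![√(1 - ε), √ε] ⬝ᵥ (diagonal ![1, ε ^ (-(1 : ℝ) / 4)] ^ k) *ᵥ ![√(1 - ε), √ε]
      = (1 - ε) + ε ^ (1 - (k : ℝ) / 4) := by
  rw [dotProduct_diagonal_pow_mulVec, Fin.sum_univ_two]
  simp only [cons_val_zero, cons_val_one, one_pow, one_mul,
    Real.sq_sqrt (sub_nonneg.mpr hε₁), Real.sq_sqrt hε₀.le]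
  rw [← Real.rpow_natCast, ← Real.rpow_mul hε₀.le, ← Real.rpow_add_one hε₀.ne']
  ring_nf

theorem tendsto_one_sub_add_rpow {a : ℝ} (ha : 0 ≤ a) :
    Tendsto (fun ε : ℝ => (1 - ε) + ε ^ a) (nhds 0) (nhds (1 + 0 ^ a)) := by
  have hcont : ContinuousAt (fun ε : ℝ => (1 - ε) + ε ^ a) 0 := by
    fun_prop (disch := exact Or.inr ha)
  simpa using hcont.tendsto

theorem moments_11112_as_limit :
    ∀ k : ℕ, k ≤ 4 →
      Tendsto
        (fun ε : ℝ =>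
          (![Real.sqrt (1 - ε), Real.sqrt ε]) ⬝ᵥ
            (((Matrix.diagonal ![1, ε ^ (-(1 : ℝ) / 4)]) ^ k).mulVec
              ![Real.sqrt (1 - ε), Real.sqrt ε]))
        (nhdsWithin 0 (Set.Ioo 0 1))
        (nhds (if k = 4 then 2 else 1)) := by
  intro k hk
  have hexp : 0 ≤ 1 - (k : ℝ) / 4 := by
    have : (k : ℝ) ≤ 4 := by exact_mod_cast hk
    linarith
  have hlimit : 1 + (0 : ℝ) ^ (1 - (k : ℝ) / 4) = if k = 4 then 2 else 1 := by
    split_ifs with h₄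
    · subst h₄; norm_num
    · have : (k : ℝ) ≠ 4 := by exact_mod_cast h₄
      rw [Real.zero_rpow (by intro h; apply this; linarith), add_zero]
  rw [← hlimit]
  refine ((tendsto_one_sub_add_rpow hexp).mono_left nhdsWithin_le_nhds).congr' ?_
  filter_upwards [self_mem_nhdsWithin] with ε hε
  exact (moment_eq_one_sub_add_rpow hε.1 hε.2.le k).symm
end

section
/- Let x_1, ..., x_d be nonnegative reals with Σ x_i = 1 and Σ x_i^2 = p_2, and let α = ⌊1/p_2⌋ with p_2 > 1/d... Then Σ x_i^3 ≥ α x³ + (1 − αx)³, where x = (α + √(α[p_2(α+1) − 1]))/(α(α+1)). -/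
/-!
The constraint set is compact, so `∑ xᵢ³` attains its minimum on it. For nonnegative triples
with the same first two power sums, the cubic power sums differ by three times the difference of
the products, and any positive triple `c ≤ b < a` can be replaced by a nonnegative one with
smaller product: `(w₁, w₂, 0)` when that has real entries, and otherwise `(u, u, v)`, where the
product is as small as real roots allow. Hence at a minimiser every positive entry but at most
one equals the largest entry `u`: the spectrum is `k` copies of `u` and one `v ∈ [0, u)`. The two
moment equations then force `k = ⌊1/p₂⌋` and make `u` the larger root of
`k(k+1)u² - 2ku + 1 - p₂ = 0`, which is `t`.
-/

open Finset

theorem cubic_sub_cubic_of_sums_eq {a b c a' b' c' : ℝ} (h₁ : a + b + c = a' + b' + c')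
    (h₂ : a ^ 2 + b ^ 2 + c ^ 2 = a' ^ 2 + b' ^ 2 + c' ^ 2) (x : ℝ) :
    (x - a') * (x - b') * (x - c') - (x - a) * (x - b) * (x - c) = a * b * c - a' * b' * c' := by
  linear_combination (x ^ 2 - x * (a + b + c + (a' + b' + c')) / 2) * h₁ + (x / 2) * h₂

theorem sum_cubes_sub_sum_cubes {a b c a' b' c' : ℝ} (h₁ : a + b + c = a' + b' + c')
    (h₂ : a ^ 2 + b ^ 2 + c ^ 2 = a' ^ 2 + b' ^ 2 + c' ^ 2) :
    a ^ 3 + b ^ 3 + c ^ 3 - (a' ^ 3 + b' ^ 3 + c' ^ 3) = 3 * (a * b * c - a' * b' * c') := by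
  linear_combination (3 / 2 * (a + b + c)) * h₂ +
    (3 / 2 * (a' ^ 2 + b' ^ 2 + c' ^ 2) - 1 / 2 * ((a + b + c) ^ 2 + (a + b + c) * (a' + b' + c')
      + (a' + b' + c') ^ 2)) * h₁

theorem exists_pair_zero_mul_lt {a b c : ℝ} (ha : 0 < a) (hb : 0 < b) (hc : 0 < c)
    (h : (a + b + c) ^ 2 < 2 * (a ^ 2 + b ^ 2 + c ^ 2)) :
    ∃ p q r : ℝ, 0 ≤ p ∧ 0 ≤ q ∧ 0 ≤ r ∧ p + q + r = a + b + c ∧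
      p ^ 2 + q ^ 2 + r ^ 2 = a ^ 2 + b ^ 2 + c ^ 2 ∧ p * q * r < a * b * c := by
  obtain ⟨w, hw0, hwσ, hw⟩ : ∃ w, 0 ≤ w ∧ w ≤ a + b + c ∧
      w ^ 2 = 2 * (a ^ 2 + b ^ 2 + c ^ 2) - (a + b + c) ^ 2 :=
    ⟨_, Real.sqrt_nonneg _, (Real.sqrt_le_left (by positivity)).2
      (by nlinarith [mul_pos ha hb, mul_pos hb hc, mul_pos ha hc]), Real.sq_sqrt (by linarith)⟩
  refine ⟨(a + b + c + w) / 2, (a + b + c - w) / 2, 0, by positivity, by linarith, le_rfl, by ring,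
    by linear_combination hw / 2, by simpa using by positivity⟩

theorem exists_double_mul_lt {a b c : ℝ} (hc : 0 ≤ c) (hcb : c ≤ b) (hba : b < a)
    (h : 2 * (a ^ 2 + b ^ 2 + c ^ 2) ≤ (a + b + c) ^ 2) :
    ∃ p q r : ℝ, 0 ≤ p ∧ 0 ≤ q ∧ 0 ≤ r ∧ p + q + r = a + b + c ∧
      p ^ 2 + q ^ 2 + r ^ 2 = a ^ 2 + b ^ 2 + c ^ 2 ∧ p * q * r < a * b * c := by
  obtain ⟨w, hw0, hwσ, hw⟩ : ∃ w, 0 < w ∧ w ≤ a + b + c ∧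
      w ^ 2 = 6 * (a ^ 2 + b ^ 2 + c ^ 2) - 2 * (a + b + c) ^ 2 :=
    ⟨_, Real.sqrt_pos.2 (by nlinarith [sq_nonneg (b - c), sq_nonneg (a - c)]),
      (Real.sqrt_le_left (by linarith)).2 (by nlinarith),
      Real.sq_sqrt (by nlinarith [sq_nonneg (a - b), sq_nonneg (b - c), sq_nonneg (a - c)])⟩
  set u := (2 * (a + b + c) + w) / 6 with hu
  set v := (a + b + c - w) / 3 with hv
  have h₁ : a + b + c = u + u + v := by ring
  have h₂ : a ^ 2 + b ^ 2 + c ^ 2 = u ^ 2 + u ^ 2 + v ^ 2 := by linear_combination -hw / 6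
  have hvu : v < u := by linarith
  have hv0 : 0 ≤ v := by linarith
  refine ⟨u, u, v, by linarith, by linarith, hv0, h₁.symm, h₂.symm, ?_⟩
  -- `(x - u)^2 (x - v)` and `(x - a)(x - b)(x - c)` differ by the constant `abc - u²v`
  have key (x : ℝ) (hx : x = a ∨ x = b) : (x - u) ^ 2 * (x - v) = a * b * c - u * u * v := by
    rcases hx with rfl | rfl <;> linear_combination cubic_sub_cubic_of_sums_eq h₁ h₂ _
  by_contra! hle
  have hau : a = u := by
    have hav : 0 < a - v := by linarith
    have : (a - u) ^ 2 * (a - v) ≤ 0 := by linarith [key a (.inl rfl)]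
    have : (a - u) ^ 2 = 0 := le_antisymm (nonpos_of_mul_nonpos_left this hav) (sq_nonneg _)
    linarith [pow_eq_zero_iff two_ne_zero |>.1 this]
  have hbv : b ≤ v := by
    have := key b (.inr rfl)
    nlinarith [pow_pos (sub_pos.2 (hau ▸ hba)) 2]
  linarith

theorem exists_triple_cube_sum_lt {a b c : ℝ} (hc : 0 < c) (hcb : c ≤ b) (hba : b < a) :
    ∃ p q r : ℝ, 0 ≤ p ∧ 0 ≤ q ∧ 0 ≤ r ∧ p + q + r = a + b + c ∧
      p ^ 2 + q ^ 2 + r ^ 2 = a ^ 2 + b ^ 2 + c ^ 2 ∧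
      p ^ 3 + q ^ 3 + r ^ 3 < a ^ 3 + b ^ 3 + c ^ 3 := by
  obtain ⟨p, q, r, hp, hq, hr, h₁, h₂, hprod⟩ : ∃ p q r : ℝ, 0 ≤ p ∧ 0 ≤ q ∧ 0 ≤ r ∧
      p + q + r = a + b + c ∧ p ^ 2 + q ^ 2 + r ^ 2 = a ^ 2 + b ^ 2 + c ^ 2 ∧
      p * q * r < a * b * c := by
    rcases lt_or_ge ((a + b + c) ^ 2) (2 * (a ^ 2 + b ^ 2 + c ^ 2)) with h | h
    · exact exists_pair_zero_mul_lt (by linarith) (by linarith) hc h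
    · exact exists_double_mul_lt hc.le hcb hba h
  exact ⟨p, q, r, hp, hq, hr, h₁, h₂, by linarith [sum_cubes_sub_sum_cubes h₁ h₂]⟩

def simplexSphere (ι : Type*) [Fintype ι] (p₂ : ℝ) : Set (ι → ℝ) :=
  stdSimplex ℝ ι ∩ {y | ∑ i, y i ^ 2 = p₂}

variable {ι : Type*} [Fintype ι]

@[simp]
theorem mem_simplexSphere {p₂ : ℝ} {y : ι → ℝ} :
    y ∈ simplexSphere ι p₂ ↔ (∀ i, 0 ≤ y i) ∧ ∑ i, y i = 1 ∧ ∑ i, y i ^ 2 = p₂ :=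
  and_assoc

theorem isCompact_simplexSphere (p₂ : ℝ) : IsCompact (simplexSphere ι p₂) :=
  (isCompact_stdSimplex ℝ ι).inter_right (isClosed_eq (by fun_prop) continuous_const)

theorem sum_comp_update [DecidableEq ι] (y : ι → ℝ) (i : ι) (p : ℝ) (g : ℝ → ℝ) :
    ∑ m, g (Function.update y i p m) = ∑ m, g (y m) - g (y i) + g p := by
  rw [← Function.comp_def g, Function.comp_update, sum_update_of_mem (mem_univ i),
    sum_eq_add_sum_sdiff_singleton_of_mem (mem_univ i) (fun m => g (y m))]
  simp only [Function.comp_apply]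
  ring

theorem exists_cube_sum_lt_of_lt {p₂ : ℝ} {y : ι → ℝ} (hy : y ∈ simplexSphere ι p₂)
    {i j l : ι} (hjl : j ≠ l) (hl : 0 < y l) (hlj : y l ≤ y j) (hji : y j < y i) :
    ∃ z ∈ simplexSphere ι p₂, ∑ m, z m ^ 3 < ∑ m, y m ^ 3 := by
  classical
  obtain ⟨p, q, r, hp, hq, hr, h₁, h₂, h₃⟩ := exists_triple_cube_sum_lt hl hlj hji
  have hij : i ≠ j := fun h => hji.ne' (congrArg y h)
  have hil : i ≠ l := fun h => (hlj.trans_lt hji).ne' (congrArg y h)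
  set z := Function.update (Function.update (Function.update y i p) j q) l r
  have hz (g : ℝ → ℝ) : ∑ m, g (z m) =
      ∑ m, g (y m) - (g (y i) + g (y j) + g (y l)) + (g p + g q + g r) := by
    simp only [z, sum_comp_update, Function.update_of_ne hjl.symm, Function.update_of_ne hil.symm,
      Function.update_of_ne hij.symm]
    ring
  obtain ⟨hy0, hy1, hy2⟩ := mem_simplexSphere.1 hy
  refine ⟨z, mem_simplexSphere.2 ⟨fun m => ?_, ?_, ?_⟩, ?_⟩
  · simp only [z, Function.update_apply]
    split_ifs <;> first | assumption | exact hy0 m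
  · rw [hz fun x => x, hy1]; linarith
  · rw [hz (· ^ 2), hy2]; linarith
  · rw [hz (· ^ 3)]; linarith

theorem eq_of_mem_Ioo_of_isMinOn {p₂ : ℝ} {y : ι → ℝ} (hy : y ∈ simplexSphere ι p₂)
    (hmin : IsMinOn (fun z => ∑ m, z m ^ 3) (simplexSphere ι p₂) y) {i₀ : ι}
    {i j : ι} (hi : y i ∈ Set.Ioo 0 (y i₀)) (hj : y j ∈ Set.Ioo 0 (y i₀)) : i = j := by
  by_contra hij
  wlog hji : y j ≤ y i generalizing i j
  · exact this hj hi (Ne.symm hij) (le_of_not_ge hji)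
  obtain ⟨z, hz, hlt⟩ := exists_cube_sum_lt_of_lt hy hij hj.1 hji hi.2
  exact (hmin hz).not_gt hlt

theorem sum_comp_eq_card_mul_add_sum_Ioo {y : ι → ℝ} {u : ℝ} (hy0 : ∀ i, 0 ≤ y i)
    (hyu : ∀ i, y i ≤ u) {f : ℝ → ℝ} (hf : f 0 = 0) :
    ∑ i, f (y i) = #{i | y i = u} * f u + ∑ i with y i ∈ Set.Ioo 0 u, f (y i) := by
  classical
  rw [← sum_filter_add_sum_filter_not univ (y · = u), sum_congr rfl fun i hi => by
    rw [(mem_filter.1 hi).2], sum_const, nsmul_eq_mul, sum_filter, sum_filter]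
  congr 1
  refine sum_congr rfl fun i _ => ?_
  rcases (hy0 i).eq_or_lt with h | h
  · simp [← h, hf]
  · simp [h, (hyu i).lt_iff_ne]

theorem exists_two_level_of_isMinOn {p₂ : ℝ} {y : ι → ℝ} (hy : y ∈ simplexSphere ι p₂)
    (hmin : IsMinOn (fun z => ∑ m, z m ^ 3) (simplexSphere ι p₂) y) :
    ∃ (k : ℕ) (u v : ℝ), 1 ≤ k ∧ 0 ≤ v ∧ v < u ∧
      ∀ f : ℝ → ℝ, f 0 = 0 → ∑ i, f (y i) = k * f u + f v := by
  obtain ⟨hy0, hy1, -⟩ := mem_simplexSphere.1 hy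
  obtain ⟨i₀, -, hi₀⟩ := univ.exists_max_image y (nonempty_of_sum_ne_zero (hy1 ▸ one_ne_zero))
  have hu : 0 < y i₀ := by
    by_contra! h
    have := sum_nonpos fun i (_ : i ∈ univ) => (hi₀ i (mem_univ i)).trans h
    linarith
  have hk : 1 ≤ #{i | y i = y i₀} := card_pos.2 ⟨i₀, by simp⟩
  have hsum := fun (f : ℝ → ℝ) (hf : f 0 = 0) =>
    sum_comp_eq_card_mul_add_sum_Ioo hy0 (fun i => hi₀ i (mem_univ i)) hf
  have hR : #{i | y i ∈ Set.Ioo 0 (y i₀)} ≤ 1 := card_le_one.2 fun i hi j hj =>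
    eq_of_mem_Ioo_of_isMinOn hy hmin (mem_filter.1 hi).2 (mem_filter.1 hj).2
  rcases Nat.le_one_iff_eq_zero_or_eq_one.1 hR with h | h
  · refine ⟨_, y i₀, 0, hk, le_rfl, hu, fun f hf => ?_⟩
    rw [hsum f hf, card_eq_zero.1 h, sum_empty, hf]
  · obtain ⟨m, hm⟩ := card_eq_one.1 h
    have hmR := (mem_filter.1 (hm ▸ mem_singleton_self m)).2
    refine ⟨_, y i₀, y m, hk, hmR.1.le, hmR.2, fun f hf => ?_⟩
    rw [hsum f hf, hm, sum_singleton]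

theorem floor_one_div_eq_of_two_level {k : ℕ} {u v p₂ : ℝ} (hk : 1 ≤ k) (hv : 0 ≤ v)
    (hvu : v < u) (h₁ : k * u + v = 1) (h₂ : k * u ^ 2 + v ^ 2 = p₂) : ⌊1 / p₂⌋₊ = k := by
  have hk' : (1 : ℝ) ≤ k := by exact_mod_cast hk
  have hp : 0 < p₂ := by nlinarith
  rw [Nat.floor_eq_iff (by positivity), le_div_iff₀ hp, div_lt_iff₀ hp]
  constructor <;> nlinarith [mul_pos (sub_pos.2 hvu) (sub_pos.2 hvu)]

theorem eq_larger_root_of_two_level {k : ℕ} {u v p₂ : ℝ} (hk : 1 ≤ k) (hvu : v < u)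
    (h₁ : k * u + v = 1) (h₂ : k * u ^ 2 + v ^ 2 = p₂) :
    u = (k + √(k * (p₂ * (k + 1) - 1))) / (k * (k + 1)) := by
  have hk' : (1 : ℝ) ≤ k := by exact_mod_cast hk
  have hsq : k * (p₂ * (k + 1) - 1) = (k * (u - v)) ^ 2 := by
    rw [← h₂]; linear_combination (k * (k * u + v + 1)) * h₁
  rw [hsq, Real.sqrt_sq (by nlinarith), eq_div_iff (by positivity)]
  linear_combination (k : ℝ) * h₁

theorem p3_OPPT_lower_bound_general (d : ℕ) (x : Fin d → ℝ)
    (hx : ∀ i, 0 ≤ x i) (h1 : ∑ i, x i = 1)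
    (p₂ : ℝ) (h2 : ∑ i, (x i) ^ 2 = p₂) :
    let α : ℕ := ⌊1 / p₂⌋₊
    let t : ℝ := ((α : ℝ) + Real.sqrt ((α : ℝ) * (p₂ * ((α : ℝ) + 1) - 1))) /
      ((α : ℝ) * ((α : ℝ) + 1))
    ∑ i, (x i) ^ 3 ≥ (α : ℝ) * t ^ 3 + (1 - (α : ℝ) * t) ^ 3 := by
  intro α t
  have hx' : x ∈ simplexSphere (Fin d) p₂ := mem_simplexSphere.2 ⟨hx, h1, h2⟩
  obtain ⟨y, hy, hmin⟩ := (isCompact_simplexSphere p₂).exists_isMinOn ⟨x, hx'⟩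
    (by fun_prop : Continuous fun z : Fin d → ℝ => ∑ i, z i ^ 3).continuousOn
  obtain ⟨k, u, v, hk, hv, hvu, hsum⟩ := exists_two_level_of_isMinOn hy hmin
  obtain ⟨-, hy1, hy2⟩ := mem_simplexSphere.1 hy
  have h₁ : k * u + v = 1 := by rw [← hy1, hsum (fun x => x) rfl]
  have h₂ : k * u ^ 2 + v ^ 2 = p₂ := by rw [← hy2, hsum (· ^ 2) (zero_pow two_ne_zero)]
  have hα : α = k := floor_one_div_eq_of_two_level hk hv hvu h₁ h₂
  have ht : t = u := by
    simp only [t, hα]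
    exact (eq_larger_root_of_two_level hk hvu h₁ h₂).symm
  calc (α : ℝ) * t ^ 3 + (1 - α * t) ^ 3 = ∑ i, y i ^ 3 := by
        rw [hsum (· ^ 3) (zero_pow three_ne_zero), hα, ht, ← h₁]; ring
    _ ≤ ∑ i, x i ^ 3 := hmin hx'

theorem p3_OPPT_lower_bound (d : ℕ) (hd : 1 ≤ d) (x : Fin d → ℝ)
    (hx : ∀ i, 0 ≤ x i) (h1 : ∑ i, x i = 1)
    (p₂ : ℝ) (h2 : ∑ i, (x i) ^ 2 = p₂)
    (hp₂ : 1 / (d : ℝ) ≤ p₂ ∧ p₂ ≤ 1) :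
    let α : ℕ := ⌊1 / p₂⌋₊
    let t : ℝ := ((α : ℝ) + Real.sqrt ((α : ℝ) * (p₂ * ((α : ℝ) + 1) - 1))) /
      ((α : ℝ) * ((α : ℝ) + 1))
    ∑ i, (x i) ^ 3 ≥ (α : ℝ) * t ^ 3 + (1 - (α : ℝ) * t) ^ 3 :=
  p3_OPPT_lower_bound_general d x hx h1 p₂ h2
end

section
/- Let x_1, ..., x_d be nonnegative reals with Σ x_i = 1 and Σ x_i^2 = p_2 where 1/d ≤ p_2 ≤ 1. Then Σ x_i^3 ≤ [1 − (d−1)y]³ + (d−1)y³, where y = (d − 1 − √((d−1)(p_2 d − 1)))/(d(d−1)). -/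
/-!
Cauchy–Schwarz applied to the coordinates other than `x i` gives `(d x_i - 1)² ≤ (d-1)(d p₂ - 1)`,
so every coordinate is at most `M = (1 + √((d-1)(d p₂ - 1)))/d`, the large entry of the extremal
configuration `(M, y, …, y)`. For `t ≤ M` we have `(t - y)² (t - M) ≤ 0`, i.e. `t³` is bounded by a
quadratic in `t` that agrees with `t³` at `M` and `y`. Summing over the coordinates, the bound only
depends on the first two power sums, which are those of `(M, y, …, y)`.
-/

open Finset

variable {ι : Type*} [Fintype ι]

theorem sq_card_mul_sub_one_le (x : ι → ℝ) (h1 : ∑ j, x j = 1) (i : ι) :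
    ((Fintype.card ι : ℝ) * x i - 1) ^ 2 ≤
      ((Fintype.card ι : ℝ) - 1) * (Fintype.card ι * ∑ j, x j ^ 2 - 1) := by
  classical
  have hsum : ∑ j ∈ univ.erase i, x j = 1 - x i := by
    rw [sum_erase_eq_sub (mem_univ i), h1]
  have hsum2 : ∑ j ∈ univ.erase i, x j ^ 2 = ∑ j, x j ^ 2 - x i ^ 2 :=
    sum_erase_eq_sub (mem_univ i)
  have hcs := sq_sum_le_card_mul_sum_sq (s := univ.erase i) (f := x)
  rw [hsum, hsum2, card_erase_of_mem (mem_univ i), card_univ,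
    Nat.cast_sub (Fintype.card_pos_iff.2 ⟨i⟩), Nat.cast_one] at hcs
  nlinarith

theorem pow_three_le_of_le {t M : ℝ} (y : ℝ) (h : t ≤ M) :
    t ^ 3 ≤ (M + 2 * y) * t ^ 2 - (2 * M * y + y ^ 2) * t + M * y ^ 2 := by
  nlinarith [mul_nonpos_of_nonneg_of_nonpos (sq_nonneg (t - y)) (sub_nonpos.2 h)]

theorem sum_pow_three_le_of_le (x : ι → ℝ) {M y : ℝ} (hM : ∀ i, x i ≤ M)
    (h1 : ∑ i, x i = M + ((Fintype.card ι : ℝ) - 1) * y)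
    (h2 : ∑ i, x i ^ 2 = M ^ 2 + ((Fintype.card ι : ℝ) - 1) * y ^ 2) :
    ∑ i, x i ^ 3 ≤ M ^ 3 + ((Fintype.card ι : ℝ) - 1) * y ^ 3 :=
  calc ∑ i, x i ^ 3
      ≤ ∑ i, ((M + 2 * y) * x i ^ 2 - (2 * M * y + y ^ 2) * x i + M * y ^ 2) :=
        sum_le_sum fun i _ => pow_three_le_of_le y (hM i)
    _ = (M + 2 * y) * ∑ i, x i ^ 2 - (2 * M * y + y ^ 2) * ∑ i, x i
          + Fintype.card ι * (M * y ^ 2) := by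
        rw [sum_add_distrib, sum_sub_distrib, ← mul_sum, ← mul_sum, sum_const, card_univ,
          nsmul_eq_mul]
    _ = M ^ 3 + ((Fintype.card ι : ℝ) - 1) * y ^ 3 := by
        rw [h1, h2]; ring

theorem p3_upper_bound_nonneg_general (d : ℕ) (hd : 2 ≤ d) (x : Fin d → ℝ)
    (h1 : ∑ i, x i = 1)
    (p₂ : ℝ) (h2 : ∑ i, (x i) ^ 2 = p₂) :
    let y : ℝ := ((d : ℝ) - 1 - Real.sqrt (((d : ℝ) - 1) * (p₂ * d - 1))) /
      ((d : ℝ) * ((d : ℝ) - 1))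
    ∑ i, (x i) ^ 3 ≤ (1 - ((d : ℝ) - 1) * y) ^ 3 + ((d : ℝ) - 1) * y ^ 3 := by
  have hcoord (i : Fin d) : ((d : ℝ) * x i - 1) ^ 2 ≤ ((d : ℝ) - 1) * (p₂ * d - 1) := by
    simpa [h2, mul_comm] using sq_card_mul_sub_one_le x h1 i
  set s := Real.sqrt (((d : ℝ) - 1) * (p₂ * d - 1))
  have hs : s ^ 2 = ((d : ℝ) - 1) * (p₂ * d - 1) :=
    Real.sq_sqrt ((sq_nonneg _).trans (hcoord ⟨0, by omega⟩))
  intro y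
  set M := (1 + s) / d
  have hd2 : (2 : ℝ) ≤ d := by exact_mod_cast hd
  have hdpos : (0 : ℝ) < d := by linarith
  have hd1 : (d : ℝ) - 1 ≠ 0 := by linarith
  have hM (i : Fin d) : x i ≤ M := by
    have := le_of_abs_le (Real.abs_le_sqrt (hcoord i))
    rw [le_div_iff₀ hdpos]
    linarith
  have hM1 : 1 - ((d : ℝ) - 1) * y = M := by
    simp only [y, M]; field_simp; ring
  have hM2 : M ^ 2 + ((d : ℝ) - 1) * y ^ 2 = p₂ := by
    simp only [y, M]; field_simp; linear_combination (d : ℝ) * hs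
  rw [hM1]
  simpa using sum_pow_three_le_of_le (y := y) x hM (by simp [h1, ← hM1]) (by simp [h2, hM2])

theorem p3_upper_bound_nonneg (d : ℕ) (hd : 2 ≤ d) (x : Fin d → ℝ)
    (hx : ∀ i, 0 ≤ x i) (h1 : ∑ i, x i = 1)
    (p₂ : ℝ) (h2 : ∑ i, (x i) ^ 2 = p₂)
    (hp₂ : 1 / (d : ℝ) ≤ p₂ ∧ p₂ ≤ 1) :
    let y : ℝ := ((d : ℝ) - 1 - Real.sqrt (((d : ℝ) - 1) * (p₂ * d - 1))) /
      ((d : ℝ) * ((d : ℝ) - 1))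
    ∑ i, (x i) ^ 3 ≤ (1 - ((d : ℝ) - 1) * y) ^ 3 + ((d : ℝ) - 1) * y ^ 3 :=
  p3_upper_bound_nonneg_general d hd x h1 p₂ h2
end

section
/- Let x_1 ≥ x_2 ≥ ... ≥ x_d ≥ 0 with Σ x_i = 1 and Σ x_i^2 = p_2, and suppose x is of the form (x_1, x_1, ..., x_1, x_{α+1}, 0, ..., 0) with x_1 appearing α times and x_{α+1} < x_1, x_{α+1} > 0. Then α = ⌊1/p_2⌋. -/
/-! With `α` entries `a` and one entry `b ∈ (0, a)` summing to `αa + b = 1`, the identities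
`(α + 1) p₂ - 1 = α (a - b)²` and `1 - α p₂ = b (α (2a - b) + b)`
give `1 / (α + 1) < p₂ ≤ 1 / α`, which pins down `⌊1 / p₂⌋`. -/

open Finset

theorem sum_comp_eq_of_forall_eq_ite {M : Type*} [AddCommMonoid M] {d α : ℕ} (hαd : α < d)
    {x : Fin d → ℝ} {a b : ℝ}
    (hx : ∀ i : Fin d, x i = if i.val < α then a else if i.val = α then b else 0)
    (g : ℝ → M) (hg : g 0 = 0) :
    ∑ i, g (x i) = α • g a + g b := by
  have hsplit : ∀ i ∈ range d, g (if i < α then a else if i = α then b else 0)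
      = (if i ∈ range α then g a else 0) + (if α = i then g b else 0) := by
    intro i _
    rcases lt_trichotomy i α with h | rfl | h
    · simp [h, h.ne']
    · simp
    · simp [h.not_gt, h.ne', h.ne, hg]
  simp only [hx]
  rw [Fin.sum_univ_eq_sum_range (fun i => g (if i < α then a else if i = α then b else 0)),
    sum_congr rfl hsplit, sum_add_distrib, sum_ite_mem,
    inter_eq_right.mpr (range_subset_range.mpr hαd.le), sum_const, card_range,
    sum_ite_eq (range d) α (fun _ => g b), if_pos (mem_range.mpr hαd)]

theorem Nat.floor_div_eq_of_mul_le_of_lt {K : Type*} [Field K] [LinearOrder K]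
    [IsStrictOrderedRing K] [FloorSemiring K] {a p : K} {n : ℕ} (hp : 0 < p)
    (hle : n * p ≤ a) (hlt : a < (n + 1) * p) : ⌊a / p⌋₊ = n := by
  rw [Nat.floor_eq_iff (div_nonneg (le_trans (by positivity) hle) hp.le),
    le_div_iff₀ hp, div_lt_iff₀ hp]
  exact ⟨hle, hlt⟩

section SumOfSquares

variable {α a b : ℝ}

theorem mul_sum_sq_le_sq_sum (hα : 0 ≤ α) (hb : 0 ≤ b) (hba : b ≤ a) :
    α * (α * a ^ 2 + b ^ 2) ≤ (α * a + b) ^ 2 := by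
  have key : (α * a + b) ^ 2 - α * (α * a ^ 2 + b ^ 2) = b * (α * (2 * a - b) + b) := by ring
  have hpos : 0 ≤ b * (α * (2 * a - b) + b) :=
    mul_nonneg hb (add_nonneg (mul_nonneg hα (by linarith)) hb)
  linarith

theorem sq_sum_lt_succ_mul_sum_sq (hα : 0 < α) (hab : b ≠ a) :
    (α * a + b) ^ 2 < (α + 1) * (α * a ^ 2 + b ^ 2) := by
  have key : (α + 1) * (α * a ^ 2 + b ^ 2) - (α * a + b) ^ 2 = α * (a - b) ^ 2 := by ring
  have hpos : 0 < α * (a - b) ^ 2 := mul_pos hα (sq_pos_of_ne_zero (sub_ne_zero.mpr hab.symm))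
  linarith

end SumOfSquares

theorem alpha_eq_floor_inv_p2 (d α : ℕ) (hα : 1 ≤ α) (hαd : α < d)
    (x₁ x' : ℝ) (hx' : 0 < x') (hx'₁ : x' < x₁)
    (x : Fin d → ℝ)
    (hform : ∀ i : Fin d, x i = if i.val < α then x₁ else if i.val = α then x' else 0)
    (p₂ : ℝ)
    (h1 : ∑ i, x i = 1) (h2 : ∑ i, (x i) ^ 2 = p₂) :
    α = ⌊1 / p₂⌋₊ := by
  have hsum : (α : ℝ) * x₁ + x' = 1 := by
    simpa [h1, nsmul_eq_mul] using (sum_comp_eq_of_forall_eq_ite hαd hform id rfl).symm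
  have hsum_sq : (α : ℝ) * x₁ ^ 2 + x' ^ 2 = p₂ := by
    simpa [h2, nsmul_eq_mul] using
      (sum_comp_eq_of_forall_eq_ite hαd hform (· ^ 2) (zero_pow two_ne_zero)).symm
  have hle : (α : ℝ) * p₂ ≤ 1 := by
    have := mul_sum_sq_le_sq_sum (Nat.cast_nonneg α) hx'.le hx'₁.le
    rwa [hsum_sq, hsum, one_pow] at this
  have hlt : 1 < ((α : ℝ) + 1) * p₂ := by
    have := sq_sum_lt_succ_mul_sum_sq (α := α) (Nat.cast_pos.mpr hα) hx'₁.ne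
    rwa [hsum_sq, hsum, one_pow] at this
  have hp₂ : 0 < p₂ := hsum_sq ▸ by positivity
  exact (Nat.floor_div_eq_of_mul_le_of_lt hp₂ hle hlt).symm
end

section
/- Let m_0, ..., m_n be reals such that the Hankel matrix H_ℓ = [m_{i+j}]_{i,j=0}^ℓ with ℓ = ⌊n/2⌋ is strictly positive definite (with m_{2ℓ+1} chosen arbitrarily if n is even). Then there exists a unit vector |φ⟩ ∈ ℝ^{ℓ+1} and a real symmetric matrix X of size (ℓ+1)×(ℓ+1) such that ⟨φ| X^k |φ⟩ = m_k for k = 0, 1, ..., n, assuming m_0 = 1. -/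
/-!
Factor the Hankel matrix as `H = Bᵀ B` with `B` invertible, so that the columns `φᵢ = B eᵢ` are
Gram vectors: `⟨φᵢ, φⱼ⟩ = m (i + j)`. The flat extension `m_{2ℓ+2} = μᵀ H⁻¹ μ` corresponds to the
operator `A` with `A eⱼ = eⱼ₊₁` for `j < ℓ` and `A e_ℓ = H⁻¹ μ`; then `H A` is the Hankel matrix of
the shifted moments, hence symmetric, so `X = B A B⁻¹ = B⁻ᵀ (H A) B⁻¹` is symmetric. Finally
`⟨φ₀, Xᵏ φ₀⟩ = e₀ᵀ H Aᵏ e₀`, and writing `k = a + b` with `a ≤ ℓ`, `b ≤ ℓ + 1` and using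
`H Aᵃ = (Aᵃ)ᵀ H` this equals `e_aᵀ H Aᵇ e₀ = m (a + b)`.
-/

open Matrix

namespace Matrix

section Congruence

variable {n K : Type*} [Fintype n] [DecidableEq n] [CommRing K] {B : Matrix n n K}

theorem isSymm_conj_of_isSymm_transpose_mul_self_mul (hB : IsUnit B.det) {A : Matrix n n K}
    (h : (Bᵀ * B * A).IsSymm) : (B * A * B⁻¹).IsSymm := by
  have hconj : B * A * B⁻¹ = B⁻¹ᵀ * (Bᵀ * B * A) * B⁻¹ := by
    simp only [← Matrix.mul_assoc, ← transpose_mul, mul_nonsing_inv B hB, transpose_one,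
      Matrix.one_mul]
  rw [hconj, IsSymm, transpose_mul, transpose_mul, h.eq, transpose_transpose, ← Matrix.mul_assoc]

theorem conj_pow (hB : IsUnit B.det) (A : Matrix n n K) (k : ℕ) :
    (B * A * B⁻¹) ^ k = B * A ^ k * B⁻¹ := by
  simpa only [IsUnit.unit_spec, coe_units_inv] using
    Units.conj_pow ((isUnit_iff_isUnit_det B).2 hB).unit A k

theorem dotProduct_conj_pow_mulVec (hB : IsUnit B.det) (A : Matrix n n K) (v : n → K) (k : ℕ) :
    (B *ᵥ v) ⬝ᵥ ((B * A * B⁻¹) ^ k *ᵥ (B *ᵥ v)) = v ⬝ᵥ ((Bᵀ * B * A ^ k) *ᵥ v) := by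
  rw [conj_pow hB, mulVec_mulVec, Matrix.mul_assoc _ B⁻¹, nonsing_inv_mul B hB,
    Matrix.mul_one, dotProduct_comm, dotProduct_mulVec, ← mulVec_transpose, dotProduct_comm,
    mulVec_mulVec, ← Matrix.mul_assoc]

end Congruence

theorem PosDef.exists_transpose_mul_self_eq {n : Type*} [Fintype n] [DecidableEq n]
    {H : Matrix n n ℝ} (hH : H.PosDef) : ∃ B : Matrix n n ℝ, IsUnit B.det ∧ Bᵀ * B = H := by
  open scoped MatrixOrder in
  obtain ⟨B, hB, rfl⟩ := CStarAlgebra.isStrictlyPositive_iff_eq_star_mul_self.mp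
    hH.isStrictlyPositive
  exact ⟨B, (isUnit_iff_isUnit_det B).1 hB, by simp [star_eq_conjTranspose]⟩

section Hankel

variable {K : Type*} (m : ℕ → K)

def hankel (N : ℕ) : Matrix (Fin N) (Fin N) K := of fun i j => m (i + j)

theorem isSymm_hankel (N : ℕ) : (hankel m N).IsSymm :=
  IsSymm.ext fun i j => by simp only [hankel, of_apply, add_comm]

variable [CommRing K]

/-- Given column by column, hence the transpose. The last column `H⁻¹ μ`, with
`μ = (m (L + 1), …, m (2L + 1))`, is the coordinate vector of the Gram vector `φ_{L+1}` of the flat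
extension in the basis `φ₀, …, φ_L`. -/
noncomputable def hankelShift (L : ℕ) : Matrix (Fin (L + 1)) (Fin (L + 1)) K :=
  (of fun j : Fin (L + 1) =>
    if h : (j : ℕ) < L then Pi.single (⟨j + 1, by omega⟩ : Fin (L + 1)) 1
    else (hankel m (L + 1))⁻¹ *ᵥ fun i => m (L + 1 + i))ᵀ

variable {m} {L : ℕ}

theorem hankelShift_pow_mulVec_single_zero {b : ℕ} (hb : b ≤ L) :
    hankelShift m L ^ b *ᵥ Pi.single 0 1 = Pi.single ⟨b, Nat.lt_succ_of_le hb⟩ 1 := by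
  induction b with
  | zero => rw [pow_zero, one_mulVec]; rfl
  | succ b ih =>
    rw [pow_succ', ← mulVec_mulVec, ih (by omega), mulVec_single_one]
    exact dif_pos (Nat.lt_of_succ_le hb)

theorem hankelShift_pow_succ_mulVec_single_zero :
    hankelShift m L ^ (L + 1) *ᵥ Pi.single 0 1 =
      (hankel m (L + 1))⁻¹ *ᵥ fun i => m (L + 1 + i) := by
  rw [pow_succ', ← mulVec_mulVec, hankelShift_pow_mulVec_single_zero le_rfl, mulVec_single_one]
  exact dif_neg (lt_irrefl L)

theorem hankel_mulVec_hankelShift_pow_mulVec_single_zero (hH : IsUnit (hankel m (L + 1)).det)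
    {b : ℕ} (hb : b ≤ L + 1) :
    hankel m (L + 1) *ᵥ (hankelShift m L ^ b *ᵥ Pi.single 0 1) =
      fun i : Fin (L + 1) => m (i + b) := by
  rcases hb.lt_or_eq with hb | rfl
  · rw [hankelShift_pow_mulVec_single_zero (by omega), mulVec_single_one]
    rfl
  · rw [hankelShift_pow_succ_mulVec_single_zero, mulVec_mulVec, mul_nonsing_inv _ hH,
      one_mulVec]
    simp only [add_comm]

theorem hankel_mul_hankelShift (hH : IsUnit (hankel m (L + 1)).det) :
    hankel m (L + 1) * hankelShift m L = hankel (fun k => m (k + 1)) (L + 1) := by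
  refine ext_of_mulVec_single fun j => ?_
  have hj := hankelShift_pow_mulVec_single_zero (m := m) (Nat.le_of_lt_succ j.isLt)
  rw [← hj, mulVec_mulVec, mulVec_mulVec, Matrix.mul_assoc, ← pow_succ', ← mulVec_mulVec,
    hankel_mulVec_hankelShift_pow_mulVec_single_zero hH (by omega), ← mulVec_mulVec, hj,
    mulVec_single_one]
  ext i
  simp only [hankel, col_apply, of_apply, add_assoc]

theorem isSymm_hankel_mul_hankelShift (hH : IsUnit (hankel m (L + 1)).det) :
    (hankel m (L + 1) * hankelShift m L).IsSymm :=
  hankel_mul_hankelShift hH ▸ isSymm_hankel _ _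

theorem single_zero_dotProduct_hankel_mul_hankelShift_pow_mulVec
    (hH : IsUnit (hankel m (L + 1)).det) {k : ℕ} (hk : k ≤ 2 * L + 1) :
    Pi.single 0 1 ⬝ᵥ ((hankel m (L + 1) * hankelShift m L ^ k) *ᵥ Pi.single 0 1) = m k := by
  have hsemiconj : SemiconjBy (hankel m (L + 1)) (hankelShift m L) (hankelShift m L)ᵀ := by
    rw [SemiconjBy, ← (isSymm_hankel_mul_hankelShift hH).eq, transpose_mul,
      (isSymm_hankel m _).eq]
  obtain ⟨a, b, ha, hb, rfl⟩ : ∃ a b, a ≤ L ∧ b ≤ L + 1 ∧ k = a + b :=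
    ⟨k - min k (L + 1), min k (L + 1), by omega, by omega, by omega⟩
  rw [pow_add, ← Matrix.mul_assoc, (hsemiconj.pow_right a).eq, Matrix.mul_assoc,
    ← mulVec_mulVec, dotProduct_mulVec, ← transpose_pow, vecMul_transpose,
    hankelShift_pow_mulVec_single_zero ha, ← mulVec_mulVec,
    hankel_mulVec_hankelShift_pow_mulVec_single_zero hH hb, single_one_dotProduct]

end Hankel

end Matrix

theorem pure_state_representation_of_posdef_hankel (n : ℕ) (m : ℕ → ℝ)
    (hm0 : m 0 = 1)
    (hH : (Matrix.of fun i j : Fin (n / 2 + 1) => m (i.val + j.val)).PosDef) :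
    ∃ (φ : Fin (n / 2 + 1) → ℝ) (X : Matrix (Fin (n / 2 + 1)) (Fin (n / 2 + 1)) ℝ),
      X.IsSymm ∧ φ ⬝ᵥ φ = 1 ∧ ∀ k, k ≤ n → φ ⬝ᵥ ((X ^ k).mulVec φ) = m k := by
  change (hankel m (n / 2 + 1)).PosDef at hH
  have hdet : IsUnit (hankel m (n / 2 + 1)).det := hH.det_pos.ne'.isUnit
  obtain ⟨B, hB, hBH⟩ := hH.exists_transpose_mul_self_eq
  have hmoment : ∀ k ≤ n, (B *ᵥ Pi.single 0 1) ⬝ᵥ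
      ((B * hankelShift m (n / 2) * B⁻¹) ^ k *ᵥ (B *ᵥ Pi.single 0 1)) = m k := fun k hk => by
    rw [dotProduct_conj_pow_mulVec hB, hBH]
    exact single_zero_dotProduct_hankel_mul_hankelShift_pow_mulVec hdet (by omega)
  refine ⟨B *ᵥ Pi.single 0 1, B * hankelShift m (n / 2) * B⁻¹, ?_, ?_, hmoment⟩
  · exact isSymm_conj_of_isSymm_transpose_mul_self_mul hB
      (hBH ▸ isSymm_hankel_mul_hankelShift hdet)
  · simpa only [pow_zero, one_mulVec, hm0] using hmoment 0 (Nat.zero_le n)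
end
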